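/- arXiv:1310.2377 — 7 statements merged into one kernel-verified Lean document; each statement's English description precedes it below -/
import Mathlib

section
/- Let $(s_n)$ be an eventually non-decreasing sequence of positive real numbers with $s_n \geq 2$ for all $n$, such that $\lim_{n\to\infty} \frac{\log s_{\tau_{n+2}}}{\log s_{\tau_n}} = 1$, where $\tau_n = n(n+1)/2$ is the $n$-th triangular number. Then $\lim_{n\to\infty} \frac{\log s_n}{\log(s_1 s_2 \cdots s_n)} = 0$. -/
/-!
Write `L n = log s n` and `τ a = a (a + 1) / 2`. The hypothesis gives `L (τ (a + 2)) ≤ 2 L (τ a)`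
for large `a`. If `τ (a + 1) ≤ n + 1 ≤ τ (a + 2)`, monotonicity gives `L n ≤ L (τ (a + 2)) ≤ 2 L (τ a)`,
while the block `[τ a, τ (a + 1))` of `a + 1` indices below `n + 1` contributes at least
`(a + 1) L (τ a)` to `log (s 0 ⋯ s n) = ∑ L i`. Hence the ratio is at most `2 / (a + 1) → 0`.
-/

open Filter Finset Topology

namespace GrowsNicely

def tri (n : ℕ) : ℕ := n * (n + 1) / 2

lemma tri_succ (n : ℕ) : tri (n + 1) = tri n + (n + 1) := by
  have h : (n + 1) * (n + 1 + 1) = n * (n + 1) + (n + 1) * 2 := by ring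
  rw [tri, tri, h, Nat.add_mul_div_right _ _ two_pos]

lemma tri_mono : Monotone tri :=
  monotone_nat_of_le_succ fun n => by rw [tri_succ]; omega

lemma self_le_tri (n : ℕ) : n ≤ tri n := by
  cases n with
  | zero => exact le_rfl
  | succ n => rw [tri_succ]; omega

lemma exists_tri_bracket (n : ℕ) : ∃ a, tri (a + 1) ≤ n + 1 ∧ n + 1 ≤ tri (a + 2) := by
  induction n with
  | zero => exact ⟨0, le_rfl, by decide⟩
  | succ n ih =>
    obtain ⟨a, hlo, hhi⟩ := ih
    rcases hhi.lt_or_eq with hlt | heq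
    · exact ⟨a, by omega, hlt⟩
    · refine ⟨a + 1, (show tri (a + 2) ≤ n + 2 by omega), ?_⟩
      rw [show a + 1 + 2 = a + 2 + 1 from rfl, tri_succ (a + 2)]
      omega

lemma add_one_mul_le_sum_range {L : ℕ → ℝ} {N a n : ℕ} (hL : ∀ i, 0 ≤ L i)
    (hmono : MonotoneOn L (Set.Ici N)) (hN : N ≤ tri a) (hn : tri (a + 1) ≤ n + 1) :
    ((a : ℝ) + 1) * L (tri a) ≤ ∑ i ∈ range (n + 1), L i :=
  calc ((a : ℝ) + 1) * L (tri a) = ∑ _i ∈ Ico (tri a) (tri (a + 1)), L (tri a) := by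
        simp [tri_succ]
    _ ≤ ∑ i ∈ Ico (tri a) (tri (a + 1)), L i :=
        sum_le_sum fun i hi => hmono hN (hN.trans (mem_Ico.1 hi).1) (mem_Ico.1 hi).1
    _ ≤ ∑ i ∈ range (n + 1), L i :=
        sum_le_sum_of_subset_of_nonneg (fun i hi => by simp at hi ⊢; omega)
          fun i _ _ => hL i

theorem tendsto_div_sum_range_of_tri_le_mul {L : ℕ → ℝ} {N : ℕ} {C : ℝ} (hL : ∀ i, 0 < L i)
    (hmono : MonotoneOn L (Set.Ici N))
    (hC : ∀ᶠ k in atTop, L (tri (k + 2)) ≤ C * L (tri k)) :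
    Tendsto (fun n => L n / ∑ i ∈ range (n + 1), L i) atTop (𝓝 0) := by
  choose a ha using exists_tri_bracket
  have ha_tendsto : Tendsto a atTop atTop := by
    refine tendsto_atTop_atTop.2 fun b => ⟨tri (b + 1), fun n hn => ?_⟩
    by_contra! hlt
    have := tri_mono (show a n + 2 ≤ b + 1 by omega)
    have := (ha n).2
    omega
  have hbound : ∀ᶠ n in atTop, L n / ∑ i ∈ range (n + 1), L i ≤ C / (a n + 1) := by
    filter_upwards [ha_tendsto.eventually hC, ha_tendsto.eventually_ge_atTop N] with n hCn hNa
    obtain ⟨hlo, hhi⟩ := ha n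
    have hNtri : N ≤ tri (a n) := hNa.trans (self_le_tri _)
    have hNn : N ≤ n := by have := self_le_tri (a n + 1); omega
    have hLn : L n ≤ C * L (tri (a n)) :=
      (hmono hNn (hNn.trans (by omega)) (by omega)).trans hCn
    have hsum := add_one_mul_le_sum_range (fun i => (hL i).le) hmono hNtri hlo
    have hpos := hL (tri (a n))
    calc L n / ∑ i ∈ range (n + 1), L i
        ≤ C * L (tri (a n)) / (((a n : ℝ) + 1) * L (tri (a n))) := by
          gcongr
          exact (hL n).le.trans hLn
      _ = C / (a n + 1) := mul_div_mul_right _ _ hpos.ne'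
  refine tendsto_of_tendsto_of_tendsto_of_le_of_le' tendsto_const_nhds ?_
    (Eventually.of_forall fun n => div_nonneg (hL n).le (sum_nonneg fun i _ => (hL i).le)) hbound
  exact tendsto_const_nhds.div_atTop
    (tendsto_atTop_add_const_right _ 1 (tendsto_natCast_atTop_atTop.comp ha_tendsto))

end GrowsNicely

open GrowsNicely

theorem stmt1 (s : ℕ → ℝ) (hs : ∀ n, 2 ≤ s n)
    (hmono : ∃ N, ∀ m n, N ≤ m → m ≤ n → s m ≤ s n)
    (hnice : Tendsto
      (fun n => Real.log (s ((n + 2) * (n + 3) / 2)) / Real.log (s (n * (n + 1) / 2)))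
      atTop (nhds 1)) :
    Tendsto (fun n => Real.log (s n) / Real.log (∏ i ∈ Finset.range (n + 1), s i))
      atTop (nhds 0) := by
  obtain ⟨N, hN⟩ := hmono
  have hspos : ∀ n, 0 < s n := fun n => two_pos.trans_le (hs n)
  have hlog_pos : ∀ n, 0 < Real.log (s n) := fun n => Real.log_pos (one_lt_two.trans_le (hs n))
  have hlog_mono : MonotoneOn (fun n => Real.log (s n)) (Set.Ici N) :=
    fun m hm n _ hmn => Real.log_le_log (hspos m) (hN m n hm hmn)
  have hdoubling : ∀ᶠ k in atTop,
      Real.log (s (tri (k + 2))) ≤ 2 * Real.log (s (tri k)) := by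
    filter_upwards [hnice.eventually (eventually_le_nhds one_lt_two)] with k hk
    exact (div_le_iff₀ (hlog_pos _)).1 hk
  convert tendsto_div_sum_range_of_tri_le_mul hlog_pos hlog_mono hdoubling using 3 with n
  exact Real.log_prod fun i _ => (hspos i).ne'
end

section
/- If $i$ and $\alpha$ are positive integers with $0 < \alpha \leq i-1$, then $\frac{\alpha}{i} \leq \frac{i}{\lfloor i^2/\alpha \rfloor} < \frac{\alpha+1}{i}$. -/
theorem stmt2 (i α : ℕ) (hα : 0 < α) (hαi : α ≤ i - 1) (hi : 2 ≤ i) :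
    (α : ℝ) / i ≤ (i : ℝ) / ((i ^ 2 / α : ℕ) : ℝ) ∧
      (i : ℝ) / ((i ^ 2 / α : ℕ) : ℝ) < ((α : ℝ) + 1) / i := by
  set q := i ^ 2 / α with hq
  have hαi' : α < i := by omega
  have h1 : q * α ≤ i ^ 2 := Nat.div_mul_le_self _ _
  have h2 : i ^ 2 < (q + 1) * α := by rw [hq]; have h := Nat.div_add_mod (i ^ 2) α; have hm := Nat.mod_lt (i ^ 2) hα; nlinarith [h, hm]
  have h3 : i ≤ q := (Nat.le_div_iff_mul_le hα).2 (by nlinarith)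
  have hqpos : 0 < q := by omega
  have hipos : (0:ℝ) < i := by positivity
  have hqr : (0:ℝ) < q := by exact_mod_cast hqpos
  constructor
  · rw [div_le_div_iff₀ hipos hqr]
    have : (q:ℝ) * α ≤ (i:ℝ)^2 := by exact_mod_cast h1
    nlinarith
  · rw [div_lt_div_iff₀ hqr hipos]
    have h2' : (i:ℝ)^2 < ((q:ℝ) + 1) * α := by exact_mod_cast h2
    have h3' : (i:ℝ) ≤ q := by exact_mod_cast h3
    have hαi'' : (α:ℝ) + 1 ≤ i := by exact_mod_cast hαi'
    nlinarith
end

section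
/- Let $P = (p_n)$ and $Q = (q_n)$ be sequences of integers with $p_n, q_n \geq 2$, and let $t \geq 1$ be such that $p_n = q_n$ for all $n > t$. Define $\psi_{P,Q}(x) = \sum_{n=1}^{\infty} \frac{\min(E_n, q_n - 1)}{q_1 \cdots q_n}$, where $x = E_0.E_1E_2\cdots$ is the $P$-Cantor series expansion of $x$. Then for all real $x$, $\psi_{P,Q}(x) = \frac{p_1 \cdots p_t}{q_1 \cdots q_t} \cdot \{x\} + \left( \sum_{n=1}^{t} \frac{\min(E_n, q_n-1)}{q_1 \cdots q_n} - \frac{p_1 \cdots p_t}{q_1 \cdots q_t} \sum_{n=1}^{t} \frac{E_n}{p_1 \cdots p_n} \right)$; in particular $\psi_{P,Q}$ is piecewise linear with slope $\frac{p_1\cdots p_t}{q_1\cdots q_t}$. -/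
/-- The `n`-th digit (0-indexed, representing `E_{n+1}`) of the `P`-Cantor series
expansion of `x`. -/
noncomputable def cantorDigit (p : ℕ → ℕ) (x : ℝ) (n : ℕ) : ℕ :=
  (⌊(∏ i ∈ Finset.range (n + 1), (p i : ℝ)) * Int.fract x⌋).toNat % p n

/-- The function `ψ_{P,Q}`. -/
noncomputable def psiPQ (p q : ℕ → ℕ) (x : ℝ) : ℝ :=
  ∑' n : ℕ, (min (cantorDigit p x n) (q n - 1) : ℝ) / ∏ i ∈ Finset.range (n + 1), (q i : ℝ)

/-!
Writing `P_N = p_1 ⋯ p_N`, the digits satisfy `⌊P_{n+1} {x}⌋ = p_{n+1} ⌊P_n {x}⌋ + E_{n+1}`,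
so the `N`-th partial sum of the Cantor series is `⌊P_N {x}⌋ / P_N`, which tends to `{x}`.
For `n > t` we have `E_n < p_n = q_n`, so the `n`-th term of `ψ_{P,Q}(x)` is
`(P_t / Q_t) · E_n / P_n`: the tail of `ψ_{P,Q}(x)` is `P_t / Q_t` times the tail of the
Cantor series of `{x}`.
-/

open Finset Filter Topology

lemma prod_range_eq_mul_prod_Ico_of_eq_of_le {M : Type*} [CommMonoid M] {f g : ℕ → M} {t m : ℕ}
    (hfg : ∀ n, t ≤ n → f n = g n) (htm : t ≤ m) :
    ∏ i ∈ range m, g i = (∏ i ∈ range t, g i) * ∏ i ∈ Ico t m, f i := by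
  rw [← prod_range_mul_prod_Ico g htm,
    prod_congr rfl fun i hi => hfg i (mem_Ico.1 hi).1]

lemma inv_prod_range_eq_of_eq_of_le {K : Type*} [Field K] {f g : ℕ → K} {t m : ℕ}
    (hfg : ∀ n, t ≤ n → f n = g n) (htm : t ≤ m) (hf : ∏ i ∈ range t, f i ≠ 0) :
    (∏ i ∈ range m, g i)⁻¹ =
      (∏ i ∈ range t, f i) / (∏ i ∈ range t, g i) * (∏ i ∈ range m, f i)⁻¹ := by
  rw [prod_range_eq_mul_prod_Ico_of_eq_of_le hfg htm,
    prod_range_eq_mul_prod_Ico_of_eq_of_le (fun _ _ => rfl) htm, mul_inv, mul_inv,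
    div_eq_mul_inv, mul_mul_mul_comm, mul_inv_cancel₀ hf, one_mul]

variable {p : ℕ → ℕ}

lemma prod_range_cast_pos (hp : ∀ n, 0 < p n) (N : ℕ) : 0 < ∏ i ∈ range N, (p i : ℝ) :=
  prod_pos fun i _ => Nat.cast_pos.2 (hp i)

lemma tendsto_prod_range_cast_atTop (hp : ∀ n, 2 ≤ p n) :
    Tendsto (fun N => ∏ i ∈ range N, (p i : ℝ)) atTop atTop := by
  have h_pow_le (N : ℕ) : 2 ^ N ≤ ∏ i ∈ range N, p i := by
    simpa using pow_card_le_prod (range N) p 2 fun i _ => hp i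
  simp_rw [← Nat.cast_prod]
  exact tendsto_natCast_atTop_atTop.comp <|
    tendsto_atTop_mono h_pow_le (tendsto_pow_atTop_atTop_of_one_lt one_lt_two)

lemma cantorDigit_lt {n : ℕ} (hp : 0 < p n) (x : ℝ) : cantorDigit p x n < p n :=
  Nat.mod_lt _ hp

lemma mul_floor_prod_add_cantorDigit {n : ℕ} (hp : 0 < p n) (x : ℝ) :
    p n * ⌊(∏ i ∈ range n, (p i : ℝ)) * Int.fract x⌋₊ + cantorDigit p x n =
      ⌊(∏ i ∈ range (n + 1), (p i : ℝ)) * Int.fract x⌋₊ := by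
  have h_div : (∏ i ∈ range n, (p i : ℝ)) * Int.fract x =
      (∏ i ∈ range (n + 1), (p i : ℝ)) * Int.fract x / p n := by
    have : (p n : ℝ) ≠ 0 := by positivity
    rw [prod_range_succ]
    field_simp
  rw [cantorDigit, Int.floor_toNat, h_div, Nat.floor_div_natCast, Nat.div_add_mod]

lemma sum_range_cantorDigit_div (hp : ∀ n, 0 < p n) (x : ℝ) (N : ℕ) :
    ∑ n ∈ range N, (cantorDigit p x n : ℝ) / ∏ i ∈ range (n + 1), (p i : ℝ) =
      ⌊(∏ i ∈ range N, (p i : ℝ)) * Int.fract x⌋₊ / ∏ i ∈ range N, (p i : ℝ) := by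
  induction N with
  | zero => simp [Nat.floor_eq_zero.2 (Int.fract_lt_one x)]
  | succ N ih =>
    have := prod_range_cast_pos hp N
    have : (p N : ℝ) ≠ 0 := Nat.cast_ne_zero.2 (hp N).ne'
    rw [sum_range_succ, ih, ← mul_floor_prod_add_cantorDigit (hp N), prod_range_succ]
    push_cast
    field_simp

lemma hasSum_cantorDigit_div (hp : ∀ n, 2 ≤ p n) (x : ℝ) :
    HasSum (fun n => (cantorDigit p x n : ℝ) / ∏ i ∈ range (n + 1), (p i : ℝ))
      (Int.fract x) := by
  have hp_pos (n : ℕ) : 0 < p n := by linarith [hp n]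
  rw [hasSum_iff_tendsto_nat_of_nonneg
    (fun n => div_nonneg (Nat.cast_nonneg _) (prod_range_cast_pos hp_pos (n + 1)).le)]
  simp_rw [sum_range_cantorDigit_div hp_pos, mul_comm _ (Int.fract x)]
  exact (tendsto_nat_floor_mul_div_atTop (Int.fract_nonneg x)).comp
    (tendsto_prod_range_cast_atTop hp)

lemma HasSum.of_eq_const_mul_of_le {α : Type*} [Ring α] [TopologicalSpace α]
    [IsTopologicalRing α] {f g : ℕ → α} {a c : α} {t : ℕ} (hg : HasSum g a)
    (hfg : ∀ n, t ≤ n → f n = c * g n) :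
    HasSum f (c * (a - ∑ n ∈ range t, g n) + ∑ n ∈ range t, f n) := by
  have h_tail : HasSum (fun n => f (n + t)) (c * (a - ∑ n ∈ range t, g n)) := by
    simp_rw [hfg _ (Nat.le_add_left t _)]
    exact ((hasSum_nat_add_iff' t).2 hg).mul_left c
  simpa using (hasSum_nat_add_iff' t).1 (by simpa using h_tail)

theorem stmt6_general (p q : ℕ → ℕ) (hp : ∀ n, 2 ≤ p n)
    (t : ℕ) (heq : ∀ n, t ≤ n → p n = q n) (x : ℝ) :
    psiPQ p q x =
      (∏ i ∈ Finset.range t, (p i : ℝ)) / (∏ i ∈ Finset.range t, (q i : ℝ)) * Int.fract x +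
        ((∑ n ∈ Finset.range t,
            (min (cantorDigit p x n) (q n - 1) : ℝ) / ∏ i ∈ Finset.range (n + 1), (q i : ℝ)) -
          (∏ i ∈ Finset.range t, (p i : ℝ)) / (∏ i ∈ Finset.range t, (q i : ℝ)) *
            ∑ n ∈ Finset.range t,
              (cantorDigit p x n : ℝ) / ∏ i ∈ Finset.range (n + 1), (p i : ℝ)) := by
  have hp_pos (n : ℕ) : 0 < p n := by linarith [hp n]
  have h_tail (n : ℕ) (hn : t ≤ n) :
      (min (cantorDigit p x n) (q n - 1) : ℝ) / ∏ i ∈ range (n + 1), (q i : ℝ) =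
        (∏ i ∈ range t, (p i : ℝ)) / (∏ i ∈ range t, (q i : ℝ)) *
          ((cantorDigit p x n : ℝ) / ∏ i ∈ range (n + 1), (p i : ℝ)) := by
    have h_min : (min (cantorDigit p x n) (q n - 1) : ℝ) = cantorDigit p x n := by
      have := cantorDigit_lt (hp_pos n) x
      rw [min_eq_left (le_sub_iff_add_le.2 (by exact_mod_cast heq n hn ▸ this))]
    rw [h_min, div_eq_mul_inv, div_eq_mul_inv, inv_prod_range_eq_of_eq_of_le
      (fun k hk => congrArg Nat.cast (heq k hk)) (by omega) (prod_range_cast_pos hp_pos t).ne']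
    ring
  rw [psiPQ, ((hasSum_cantorDigit_div hp x).of_eq_const_mul_of_le h_tail).tsum_eq]
  ring

theorem stmt6 (p q : ℕ → ℕ) (hp : ∀ n, 2 ≤ p n) (hq : ∀ n, 2 ≤ q n)
    (t : ℕ) (ht : 1 ≤ t) (heq : ∀ n, t ≤ n → p n = q n) (x : ℝ) :
    psiPQ p q x =
      (∏ i ∈ Finset.range t, (p i : ℝ)) / (∏ i ∈ Finset.range t, (q i : ℝ)) * Int.fract x +
        ((∑ n ∈ Finset.range t,
            (min (cantorDigit p x n) (q n - 1) : ℝ) / ∏ i ∈ Finset.range (n + 1), (q i : ℝ)) -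
          (∏ i ∈ Finset.range t, (p i : ℝ)) / (∏ i ∈ Finset.range t, (q i : ℝ)) *
            ∑ n ∈ Finset.range t,
              (cantorDigit p x n : ℝ) / ∏ i ∈ Finset.range (n + 1), (p i : ℝ)) :=
  stmt6_general p q hp t heq x
end

section
/- Let $\mu$ be a shift-invariant Borel probability measure on $\mathbb{N}_2^{\mathbb{N}} \times \mathbb{N}_2^{\mathbb{N}}$ (shift $\sigma$ acting diagonally) such that $\int \pi_1(\omega)^2 \, d\mu(\omega) < \infty$ and $\int \pi_2(\omega)^2 \, d\mu(\omega) < \infty$, where $\pi_1, \pi_2$ give the first coordinates of each sequence. Then for $\mu$-almost every $(P, Q) = ((p_n), (q_n))$, $\sum_{k=1}^{\infty} \sum_{j=k+1}^{\infty} \frac{p_k (p_j + q_j)}{q_1 \cdots q_j} < \infty$. -/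
open Filter MeasureTheory

abbrev NSeq : Type := ℕ → {k : ℕ // 2 ≤ k}

def shift (ω : NSeq) : NSeq := fun n => ω (n + 1)

/-!
Since every `q_i ≥ 2`, the `(k, j)` term is at most `p_k (p_j + q_j) 2^{-(j+1)}`, and by AM-GM
`p_k (p_j + q_j) ≤ p_k² + p_j² + q_j²`. Shift invariance makes `∫ p_n²` and `∫ q_n²` independent
of `n`, so the integrals of the terms are summable over `k < j`; by monotone convergence the
double series then has finite integral, hence converges almost everywhere.
-/

open Finset

theorem MeasureTheory.MeasurePreserving.integral_comp_of_aestronglyMeasurable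
    {α β : Type*} [MeasurableSpace α] [MeasurableSpace β] {μ : Measure α} {ν : Measure β}
    {f : α → β} (hf : MeasurePreserving f μ ν) {g : β → ℝ} (hg : AEStronglyMeasurable g ν) :
    ∫ x, g (f x) ∂μ = ∫ y, g y ∂ν := by
  rw [← hf.map_eq] at hg ⊢
  exact (integral_map hf.measurable.aemeasurable hg).symm

theorem ae_summable_of_summable_integral {α ι : Type*} [MeasurableSpace α] {μ : Measure α}
    [Countable ι] {f : ι → α → ℝ} (hf_nonneg : ∀ i x, 0 ≤ f i x)
    (hf : ∀ i, Integrable (f i) μ) (hsum : Summable fun i => ∫ x, f i x ∂μ) :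
    ∀ᵐ x ∂μ, Summable fun i => f i x := by
  have hlint : ∫⁻ x, ∑' i, ENNReal.ofReal (f i x) ∂μ ≠ ⊤ := by
    rw [lintegral_tsum fun i => (hf i).aemeasurable.ennreal_ofReal]
    simp_rw [← ofReal_integral_eq_lintegral_ofReal (hf _) (.of_forall (hf_nonneg _)),
      ← ENNReal.ofReal_tsum_of_nonneg (fun i => integral_nonneg (hf_nonneg i)) hsum]
    exact ENNReal.ofReal_ne_top
  filter_upwards [ae_lt_top' (AEMeasurable.tsum
    fun i => (hf i).aemeasurable.ennreal_ofReal) hlint] with x hx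
  simpa only [ENNReal.toReal_ofReal (hf_nonneg _ x)] using ENNReal.summable_toReal hx.ne

theorem shift_iterate_apply (n m : ℕ) (x : NSeq) : shift^[n] x m = x (m + n) := by
  induction n generalizing x with
  | zero => rfl
  | succ n ih => rw [Function.iterate_succ_apply, ih]; rfl

section ShiftInvariant

variable {μ : Measure (NSeq × NSeq)} {g : {k : ℕ // 2 ≤ k} × {k : ℕ // 2 ≤ k} → ℝ}

theorem comp_apply_eq_comp_iterate (n : ℕ) :
    (fun ω : NSeq × NSeq => g (ω.1 n, ω.2 n)) =
      (fun ω => g (ω.1 0, ω.2 0)) ∘ (Prod.map shift shift)^[n] := by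
  funext ω
  simp [Prod.map_iterate, shift_iterate_apply]

theorem integrable_comp_apply_of_shift_invariant
    (hinv : MeasurePreserving (Prod.map shift shift) μ μ)
    (hg : Integrable (fun ω : NSeq × NSeq => g (ω.1 0, ω.2 0)) μ) (n : ℕ) :
    Integrable (fun ω : NSeq × NSeq => g (ω.1 n, ω.2 n)) μ := by
  rw [comp_apply_eq_comp_iterate]
  exact (hinv.iterate n).integrable_comp_of_integrable hg

theorem integral_comp_apply_of_shift_invariant
    (hinv : MeasurePreserving (Prod.map shift shift) μ μ)
    (hg : Integrable (fun ω : NSeq × NSeq => g (ω.1 0, ω.2 0)) μ) (n : ℕ) :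
    ∫ ω, g (ω.1 n, ω.2 n) ∂μ = ∫ ω, g (ω.1 0, ω.2 0) ∂μ := by
  rw [comp_apply_eq_comp_iterate]
  exact (hinv.iterate n).integral_comp_of_aestronglyMeasurable hg.1

end ShiftInvariant

noncomputable def doubleSeriesTerm (ω : NSeq × NSeq) (kj : ℕ × ℕ) : ℝ :=
  if kj.1 < kj.2 then
    ((ω.1 kj.1 : ℕ) : ℝ) * (((ω.1 kj.2 : ℕ) : ℝ) + ((ω.2 kj.2 : ℕ) : ℝ)) /
      ∏ i ∈ range (kj.2 + 1), ((ω.2 i : ℕ) : ℝ)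
  else 0

theorem doubleSeriesTerm_nonneg (kj : ℕ × ℕ) (ω : NSeq × NSeq) : 0 ≤ doubleSeriesTerm ω kj := by
  unfold doubleSeriesTerm
  split_ifs <;> positivity

theorem measurable_doubleSeriesTerm (kj : ℕ × ℕ) : Measurable fun ω => doubleSeriesTerm ω kj := by
  unfold doubleSeriesTerm
  split_ifs <;> fun_prop

theorem two_pow_le_prod_range (x : NSeq) (n : ℕ) :
    (2 : ℝ) ^ n ≤ ∏ i ∈ range n, ((x i : ℕ) : ℝ) := by
  have := Finset.pow_card_le_prod (range n) (fun i => (x i : ℕ)) 2 fun i _ => (x i).2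
  rw [card_range] at this
  exact_mod_cast this

/-- `(3/4)² ≥ 1/2`: for `k < j` the weight `2^{-(j+1)}` is dominated by a product of two geometric
weights, which is summable over `ℕ × ℕ`. -/
theorem half_pow_succ_le_mul {k j : ℕ} (hkj : k < j) :
    (1 / 2 : ℝ) ^ (j + 1) ≤ (3 / 4) ^ k * (3 / 4) ^ j :=
  calc (1 / 2 : ℝ) ^ (j + 1) ≤ (1 / 2) ^ j :=
        pow_le_pow_of_le_one (by norm_num) (by norm_num) j.le_succ
    _ ≤ (9 / 16) ^ j := pow_le_pow_left₀ (by norm_num) (by norm_num) j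
    _ = (3 / 4) ^ j * (3 / 4) ^ j := by rw [← mul_pow]; norm_num
    _ ≤ (3 / 4) ^ k * (3 / 4) ^ j := by
        gcongr ?_ * _
        exact pow_le_pow_of_le_one (by norm_num) (by norm_num) hkj.le

theorem doubleSeriesTerm_le (ω : NSeq × NSeq) (kj : ℕ × ℕ) :
    doubleSeriesTerm ω kj ≤ (((ω.1 kj.1 : ℕ) : ℝ) ^ 2 + ((ω.1 kj.2 : ℕ) : ℝ) ^ 2
      + ((ω.2 kj.2 : ℕ) : ℝ) ^ 2) * ((3 / 4) ^ kj.1 * (3 / 4) ^ kj.2) := by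
  obtain ⟨k, j⟩ := kj
  unfold doubleSeriesTerm
  split_ifs with hkj
  · set p := ((ω.1 k : ℕ) : ℝ)
    set x := ((ω.1 j : ℕ) : ℝ)
    set y := ((ω.2 j : ℕ) : ℝ)
    calc p * (x + y) / ∏ i ∈ range (j + 1), ((ω.2 i : ℕ) : ℝ)
        ≤ p * (x + y) * (1 / 2) ^ (j + 1) := by
          rw [div_eq_mul_inv, one_div, inv_pow]
          gcongr
          exact two_pow_le_prod_range ω.2 (j + 1)
      _ ≤ (p ^ 2 + x ^ 2 + y ^ 2) * ((3 / 4) ^ k * (3 / 4) ^ j) := by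
          gcongr ?_ * ?_
          · nlinarith [sq_nonneg (p - x), sq_nonneg (p - y)]
          · exact half_pow_succ_le_mul hkj
  · positivity

section Integral

variable {μ : Measure (NSeq × NSeq)}

theorem integrable_doubleSeriesTerm_bound (hinv : MeasurePreserving (Prod.map shift shift) μ μ)
    (hi1 : Integrable (fun ω : NSeq × NSeq => ((ω.1 0 : ℕ) : ℝ) ^ 2) μ)
    (hi2 : Integrable (fun ω : NSeq × NSeq => ((ω.2 0 : ℕ) : ℝ) ^ 2) μ) (kj : ℕ × ℕ) :
    Integrable (fun ω : NSeq × NSeq => (((ω.1 kj.1 : ℕ) : ℝ) ^ 2 + ((ω.1 kj.2 : ℕ) : ℝ) ^ 2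
      + ((ω.2 kj.2 : ℕ) : ℝ) ^ 2) * ((3 / 4) ^ kj.1 * (3 / 4) ^ kj.2)) μ :=
  have hp := integrable_comp_apply_of_shift_invariant (g := fun x => ((x.1 : ℕ) : ℝ) ^ 2) hinv hi1
  have hq := integrable_comp_apply_of_shift_invariant (g := fun x => ((x.2 : ℕ) : ℝ) ^ 2) hinv hi2
  (((hp kj.1).add (hp kj.2)).add (hq kj.2)).mul_const _

theorem integral_doubleSeriesTerm_le (hinv : MeasurePreserving (Prod.map shift shift) μ μ)
    (hi1 : Integrable (fun ω : NSeq × NSeq => ((ω.1 0 : ℕ) : ℝ) ^ 2) μ)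
    (hi2 : Integrable (fun ω : NSeq × NSeq => ((ω.2 0 : ℕ) : ℝ) ^ 2) μ) (kj : ℕ × ℕ) :
    ∫ ω, doubleSeriesTerm ω kj ∂μ ≤
      (2 * ∫ ω, ((ω.1 0 : ℕ) : ℝ) ^ 2 ∂μ + ∫ ω, ((ω.2 0 : ℕ) : ℝ) ^ 2 ∂μ)
        * ((3 / 4) ^ kj.1 * (3 / 4) ^ kj.2) := by
  have hp : ∀ n, Integrable (fun ω : NSeq × NSeq => ((ω.1 n : ℕ) : ℝ) ^ 2) μ :=
    integrable_comp_apply_of_shift_invariant (g := fun x => ((x.1 : ℕ) : ℝ) ^ 2) hinv hi1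
  have hq : ∀ n, Integrable (fun ω : NSeq × NSeq => ((ω.2 n : ℕ) : ℝ) ^ 2) μ :=
    integrable_comp_apply_of_shift_invariant (g := fun x => ((x.2 : ℕ) : ℝ) ^ 2) hinv hi2
  have hp' : ∀ n, ∫ ω, ((ω.1 n : ℕ) : ℝ) ^ 2 ∂μ = ∫ ω, ((ω.1 0 : ℕ) : ℝ) ^ 2 ∂μ :=
    integral_comp_apply_of_shift_invariant (g := fun x => ((x.1 : ℕ) : ℝ) ^ 2) hinv hi1
  have hq' : ∀ n, ∫ ω, ((ω.2 n : ℕ) : ℝ) ^ 2 ∂μ = ∫ ω, ((ω.2 0 : ℕ) : ℝ) ^ 2 ∂μ :=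
    integral_comp_apply_of_shift_invariant (g := fun x => ((x.2 : ℕ) : ℝ) ^ 2) hinv hi2
  calc ∫ ω, doubleSeriesTerm ω kj ∂μ
      ≤ ∫ ω, (((ω.1 kj.1 : ℕ) : ℝ) ^ 2 + ((ω.1 kj.2 : ℕ) : ℝ) ^ 2
          + ((ω.2 kj.2 : ℕ) : ℝ) ^ 2) * ((3 / 4) ^ kj.1 * (3 / 4) ^ kj.2) ∂μ :=
        integral_mono_of_nonneg (.of_forall (doubleSeriesTerm_nonneg kj))
          (integrable_doubleSeriesTerm_bound hinv hi1 hi2 kj)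
          (.of_forall (doubleSeriesTerm_le · kj))
    _ = _ := by
        rw [integral_mul_const, integral_add ?_ (hq _), integral_add (hp _) (hp _), hp' kj.1,
          hp' kj.2, hq' kj.2, two_mul]
        exact (hp _).add (hp _)

theorem integrable_doubleSeriesTerm (hinv : MeasurePreserving (Prod.map shift shift) μ μ)
    (hi1 : Integrable (fun ω : NSeq × NSeq => ((ω.1 0 : ℕ) : ℝ) ^ 2) μ)
    (hi2 : Integrable (fun ω : NSeq × NSeq => ((ω.2 0 : ℕ) : ℝ) ^ 2) μ) (kj : ℕ × ℕ) :
    Integrable (fun ω => doubleSeriesTerm ω kj) μ :=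
  (integrable_doubleSeriesTerm_bound hinv hi1 hi2 kj).mono'
    (measurable_doubleSeriesTerm kj).aestronglyMeasurable
    (.of_forall fun ω => by
      rw [Real.norm_of_nonneg (doubleSeriesTerm_nonneg kj ω)]
      exact doubleSeriesTerm_le ω kj)

end Integral

theorem stmt10_general (μ : Measure (NSeq × NSeq))
    (hinv : MeasurePreserving (Prod.map shift shift) μ μ)
    (hi1 : Integrable (fun ω : NSeq × NSeq => ((ω.1 0 : ℕ) : ℝ) ^ 2) μ)
    (hi2 : Integrable (fun ω : NSeq × NSeq => ((ω.2 0 : ℕ) : ℝ) ^ 2) μ) :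
    ∀ᵐ ω ∂μ, Summable (fun kj : ℕ × ℕ => if kj.1 < kj.2 then
      ((ω.1 kj.1 : ℕ) : ℝ) * (((ω.1 kj.2 : ℕ) : ℝ) + ((ω.2 kj.2 : ℕ) : ℝ)) /
        ∏ i ∈ Finset.range (kj.2 + 1), ((ω.2 i : ℕ) : ℝ) else 0) := by
  have hweights : Summable fun kj : ℕ × ℕ => ((3 / 4 : ℝ) ^ kj.1 * (3 / 4) ^ kj.2) :=
    have hgeom := summable_geometric_of_lt_one (r := (3 / 4 : ℝ)) (by norm_num) (by norm_num)
    hgeom.mul_of_nonneg hgeom (fun _ => by positivity) (fun _ => by positivity)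
  exact ae_summable_of_summable_integral doubleSeriesTerm_nonneg
    (integrable_doubleSeriesTerm hinv hi1 hi2)
    ((hweights.mul_left _).of_nonneg_of_le (fun kj => integral_nonneg (doubleSeriesTerm_nonneg kj))
      (integral_doubleSeriesTerm_le hinv hi1 hi2))

theorem stmt10 (μ : Measure (NSeq × NSeq)) [IsProbabilityMeasure μ]
    (hinv : MeasurePreserving (Prod.map shift shift) μ μ)
    (hi1 : Integrable (fun ω : NSeq × NSeq => ((ω.1 0 : ℕ) : ℝ) ^ 2) μ)
    (hi2 : Integrable (fun ω : NSeq × NSeq => ((ω.2 0 : ℕ) : ℝ) ^ 2) μ) :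
    ∀ᵐ ω ∂μ, Summable (fun kj : ℕ × ℕ => if kj.1 < kj.2 then
      ((ω.1 kj.1 : ℕ) : ℝ) * (((ω.1 kj.2 : ℕ) : ℝ) + ((ω.2 kj.2 : ℕ) : ℝ)) /
        ∏ i ∈ Finset.range (kj.2 + 1), ((ω.2 i : ℕ) : ℝ) else 0) :=
  stmt10_general μ hinv hi1 hi2
end

section
/- Let $P = (p_n)$ and $Q = (q_n)$ be sequences of integers with $p_n, q_n \geq 2$ and suppose $p_n > q_n$ for infinitely many $n$. Then $\psi_{P,Q}$ is monotone on no interval: for every nondegenerate interval $J \subseteq [0,1)$ there exist $c < x < y$ in $J$ with $\psi_{P,Q}(c) < \psi_{P,Q}(x)$ and $\psi_{P,Q}(x) > \psi_{P,Q}(y)$. -/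
/-!
Choose `n` with `q n < p n` so large that some cylinder `[k / P, (k + 1) / P)` of rank `n`
(`P = p 0 ⋯ p (n - 1)`) lies in `[a, b]`. Inside it, let `c` and `y` have the single further digit
`q n - 1`, resp. `p n - 1`, at position `n`. Since `ψ` truncates the `n`-th digit at `q n - 1`,
`ψ c = ψ y`, while `c < y` because `q n < p n`. The point `x` obtained from `c` by the further digit
`1` lies between them and has `ψ x = ψ c + 1 / (q 0 ⋯ q (n + 1)) > ψ c = ψ y`.
-/

open Finset

noncomputable def cantorPoint (p : ℕ → ℕ) (k m : ℕ) : ℝ :=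
  (k : ℝ) / (∏ i ∈ range m, p i : ℕ)

section CantorSeries

variable {p q : ℕ → ℕ}

theorem cantorDigit_cantorPoint {k m : ℕ} (hk : k < ∏ i ∈ range m, p i) (n : ℕ) :
    cantorDigit p (cantorPoint p k m) n =
      if n < m then k / (∏ i ∈ Ico (n + 1) m, p i) % p n else 0 := by
  have hm : (∏ i ∈ range m, p i : ℕ) ≠ 0 := (Nat.zero_lt_of_lt hk).ne'
  rw [cantorDigit, cantorPoint, Int.fract_div_natCast_eq_div_natCast_mod, Nat.mod_eq_of_lt hk,
    ← Nat.cast_prod]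
  split_ifs with hnm
  · have hn : ((∏ i ∈ range (n + 1), p i : ℕ) : ℝ) ≠ 0 := by
      rw [← prod_range_mul_prod_Ico p (m := n + 1) hnm] at hm
      exact_mod_cast left_ne_zero_of_mul hm
    rw [← prod_range_mul_prod_Ico p (m := n + 1) hnm, Nat.cast_mul, mul_div_assoc',
      mul_div_mul_left _ _ hn, ← Nat.floor_div_eq_div (K := ℝ), Int.floor_toNat]
  · rw [← prod_range_mul_prod_Ico p (m := m) (n := n + 1) (by omega), Nat.cast_mul, mul_comm,
      ← mul_assoc, div_mul_cancel₀ _ (Nat.cast_ne_zero.mpr hm), ← Nat.cast_mul,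
      Int.floor_natCast, Int.toNat_natCast]
    exact Nat.mod_eq_zero_of_dvd <| dvd_mul_of_dvd_right
      (dvd_prod_of_mem p (mem_Ico.mpr ⟨not_lt.mp hnm, n.lt_succ_self⟩)) k

theorem append_lt_prod_range_succ {k m d : ℕ} (hk : k < ∏ i ∈ range m, p i) (hd : d < p m) :
    k * p m + d < ∏ i ∈ range (m + 1), p i := by
  rw [prod_range_succ]
  nlinarith

theorem cantorDigit_cantorPoint_append {k m d : ℕ} (hk : k < ∏ i ∈ range m, p i)
    (hd : d < p m) :
    cantorDigit p (cantorPoint p (k * p m + d) (m + 1)) =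
      Function.update (cantorDigit p (cantorPoint p k m)) m d := by
  funext n
  rw [cantorDigit_cantorPoint (append_lt_prod_range_succ hk hd)]
  rcases lt_trichotomy n m with hnm | rfl | hnm
  · rw [Function.update_of_ne hnm.ne, cantorDigit_cantorPoint hk, if_pos (by omega), if_pos hnm,
      prod_Ico_succ_top (by omega : n + 1 ≤ m), Nat.mul_comm (∏ i ∈ Ico (n + 1) m, p i),
      ← Nat.div_div_eq_div_mul, Nat.mul_comm k, Nat.mul_add_div (by omega),
      Nat.div_eq_of_lt hd, add_zero]
  · rw [Function.update_self, if_pos n.lt_succ_self, Ico_self, prod_empty, Nat.div_one,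
      Nat.mul_add_mod_self_right, Nat.mod_eq_of_lt hd]
  · rw [Function.update_of_ne hnm.ne', cantorDigit_cantorPoint hk, if_neg (by omega),
      if_neg (by omega)]

theorem psiPQ_eq_sum_of_cantorDigit_eq_zero (hq : ∀ n, 1 ≤ q n) {x : ℝ} {m : ℕ}
    (hx : ∀ n, m ≤ n → cantorDigit p x n = 0) :
    psiPQ p q x = ∑ n ∈ range m,
      ((min (cantorDigit p x n) (q n - 1) : ℕ) : ℝ) / ∏ i ∈ range (n + 1), (q i : ℝ) := by
  rw [psiPQ, tsum_eq_sum (s := range m)]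
  · refine sum_congr rfl fun n _ => ?_
    push_cast [Nat.cast_sub (hq n)]
    rfl
  · intro n hn
    rw [hx n (by simpa using hn), Nat.cast_zero, min_eq_left (by simpa using hq n), zero_div]

theorem psiPQ_cantorPoint (hq : ∀ n, 1 ≤ q n) {k m : ℕ} (hk : k < ∏ i ∈ range m, p i) :
    psiPQ p q (cantorPoint p k m) = ∑ n ∈ range m,
      ((min (cantorDigit p (cantorPoint p k m) n) (q n - 1) : ℕ) : ℝ) /
        ∏ i ∈ range (n + 1), (q i : ℝ) :=
  psiPQ_eq_sum_of_cantorDigit_eq_zero hq fun n hn => by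
    rw [cantorDigit_cantorPoint hk, if_neg (not_lt.mpr hn)]

theorem psiPQ_cantorPoint_append (hq : ∀ n, 1 ≤ q n) {k m d : ℕ}
    (hk : k < ∏ i ∈ range m, p i) (hd : d < p m) :
    psiPQ p q (cantorPoint p (k * p m + d) (m + 1)) =
      psiPQ p q (cantorPoint p k m) +
        ((min d (q m - 1) : ℕ) : ℝ) / ∏ i ∈ range (m + 1), (q i : ℝ) := by
  rw [psiPQ_cantorPoint hq (append_lt_prod_range_succ hk hd), psiPQ_cantorPoint hq hk,
    sum_range_succ, cantorDigit_cantorPoint_append hk hd, Function.update_self]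
  congr 1
  refine sum_congr rfl fun n hn => ?_
  rw [Function.update_of_ne (mem_range.mp hn).ne]

theorem psiPQ_cantorPoint_append_of_pred_le (hq : ∀ n, 1 ≤ q n) {k m d : ℕ}
    (hk : k < ∏ i ∈ range m, p i) (hd : d < p m) (hqd : q m - 1 ≤ d) :
    psiPQ p q (cantorPoint p (k * p m + d) (m + 1)) =
      psiPQ p q (cantorPoint p (k * p m + (q m - 1)) (m + 1)) := by
  rw [psiPQ_cantorPoint_append hq hk hd, psiPQ_cantorPoint_append hq hk (hqd.trans_lt hd),
    min_eq_right hqd, min_self]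

theorem psiPQ_lt_psiPQ_cantorPoint_append (hq : ∀ n, 1 ≤ q n) {k m d : ℕ} (hqm : 2 ≤ q m)
    (hk : k < ∏ i ∈ range m, p i) (hd₀ : 0 < d) (hd : d < p m) :
    psiPQ p q (cantorPoint p k m) < psiPQ p q (cantorPoint p (k * p m + d) (m + 1)) := by
  rw [psiPQ_cantorPoint_append hq hk hd]
  have hQ : (0 : ℝ) < ∏ i ∈ range (m + 1), (q i : ℝ) :=
    prod_pos fun i _ => Nat.cast_pos.mpr (hq i)
  exact lt_add_of_pos_right _ <| div_pos (Nat.cast_pos.mpr (by omega)) hQ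

theorem cantorPoint_append {m : ℕ} (hm : p m ≠ 0) (k d : ℕ) :
    cantorPoint p (k * p m + d) (m + 1) = (k + d / p m) / (∏ i ∈ range m, p i : ℕ) := by
  have hm' : (p m : ℝ) ≠ 0 := Nat.cast_ne_zero.mpr hm
  rw [cantorPoint, prod_range_succ, Nat.cast_mul, ← div_div, add_div' _ _ _ hm']
  push_cast
  ring

theorem cantorPoint_append_mem_Ioo {k m d : ℕ} (hP : 0 < ∏ i ∈ range m, p i) (hd₀ : 0 < d)
    (hd : d < p m) :
    cantorPoint p (k * p m + d) (m + 1) ∈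
      Set.Ioo (cantorPoint p k m) (cantorPoint p (k + 1) m) := by
  have hpm : (0 : ℝ) < p m := by exact_mod_cast hd₀.trans hd
  have hfrac : (0 : ℝ) < d / p m ∧ (d : ℝ) / p m < 1 :=
    ⟨by positivity, (div_lt_one hpm).mpr (by exact_mod_cast hd)⟩
  rw [cantorPoint_append (hd₀.trans hd).ne', cantorPoint, cantorPoint, Nat.cast_succ]
  constructor <;> gcongr <;> linarith [hfrac.1, hfrac.2]

theorem cantorPoint_mono_left {k k' : ℕ} (h : k ≤ k') (m : ℕ) :
    cantorPoint p k m ≤ cantorPoint p k' m := by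
  unfold cantorPoint
  gcongr

theorem exists_lt_prod_range (hp : ∀ n, 2 ≤ p n) {s : Set ℕ} (hs : s.Infinite) (C : ℝ) :
    ∃ n ∈ s, C < (∏ i ∈ range n, p i : ℕ) := by
  obtain ⟨N, hN⟩ := pow_unbounded_of_one_lt C one_lt_two
  obtain ⟨n, hns, hNn⟩ := hs.exists_gt N
  refine ⟨n, hns, hN.trans_le ?_⟩
  calc (2 : ℝ) ^ N ≤ 2 ^ n := pow_le_pow_right₀ one_le_two hNn.le
    _ ≤ (∏ i ∈ range n, p i : ℕ) := by
      exact_mod_cast card_range n ▸ pow_card_le_prod _ _ _ fun i _ => hp i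

theorem exists_cantorPoint_subset_Icc {a b : ℝ} (ha : 0 ≤ a) (hab : a < b) (hb : b ≤ 1) {m : ℕ}
    (hm : 2 / (b - a) ≤ (∏ i ∈ range m, p i : ℕ)) :
    ∃ k < ∏ i ∈ range m, p i, a ≤ cantorPoint p k m ∧ cantorPoint p (k + 1) m ≤ b := by
  set N := ∏ i ∈ range m, p i
  have hN : (0 : ℝ) < N := (div_pos two_pos (sub_pos.mpr hab)).trans_le hm
  have hN2 : 2 ≤ (b - a) * N := by rwa [div_le_iff₀' (sub_pos.mpr hab)] at hm
  have hkb : ((⌈a * N⌉₊ + 1 : ℕ) : ℝ) ≤ b * N := by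
    push_cast
    linarith [Nat.ceil_lt_add_one (mul_nonneg ha hN.le)]
  refine ⟨⌈a * N⌉₊, ?_, (le_div_iff₀ hN).mpr (Nat.le_ceil _), (div_le_iff₀ hN).mpr hkb⟩
  have : ((⌈a * N⌉₊ + 1 : ℕ) : ℝ) ≤ N := hkb.trans (by nlinarith)
  exact_mod_cast this

end CantorSeries

theorem stmt11 (p q : ℕ → ℕ) (hp : ∀ n, 2 ≤ p n) (hq : ∀ n, 2 ≤ q n)
    (hinf : {n | q n < p n}.Infinite) :
    ∀ a b : ℝ, 0 ≤ a → a < b → b < 1 →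
      ∃ c x y : ℝ, a ≤ c ∧ c < x ∧ x < y ∧ y ≤ b ∧
        psiPQ p q c < psiPQ p q x ∧ psiPQ p q y < psiPQ p q x := by
  intro a b ha hab hb1
  have hq₁ : ∀ n, 1 ≤ q n := fun n => one_le_two.trans (hq n)
  obtain ⟨n, hqp : q n < p n, hn⟩ := exists_lt_prod_range hp hinf (2 / (b - a))
  obtain ⟨k, hk, hak, hkb⟩ := exists_cantorPoint_subset_Icc ha hab hb1.le hn.le
  have hP : 0 < ∏ i ∈ range n, p i := Nat.zero_lt_of_lt hk
  have hpn := hp n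
  have hqn := hq n
  have hkc := append_lt_prod_range_succ hk (show q n - 1 < p n by omega)
  obtain ⟨hc, -⟩ := cantorPoint_append_mem_Ioo (k := k) hP (show 0 < q n - 1 by omega) (by omega)
  obtain ⟨-, hy⟩ := cantorPoint_append_mem_Ioo (k := k) hP (show 0 < p n - 1 by omega) (by omega)
  obtain ⟨hcx, hx⟩ := cantorPoint_append_mem_Ioo (Nat.zero_lt_of_lt hkc) one_pos (hp (n + 1))
  have hψcx := psiPQ_lt_psiPQ_cantorPoint_append hq₁ (hq (n + 1)) hkc one_pos (hp (n + 1))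
  have hψyc := psiPQ_cantorPoint_append_of_pred_le hq₁ hk (show p n - 1 < p n by omega)
    (show q n - 1 ≤ p n - 1 by omega)
  have hxy := hx.trans_le <| cantorPoint_mono_left (p := p)
    (show k * p n + (q n - 1) + 1 ≤ k * p n + (p n - 1) by omega) (n + 1)
  exact ⟨_, _, _, hak.trans hc.le, hcx, hxy, hy.le.trans hkb, hψcx, hψyc ▸ hψcx⟩
end

section
/- Let $Q = (q_n)$ be a sequence of integers with $q_n \geq 2$ and $q_n \to \infty$, and let $x \in [0,1)$ be $Q$-distribution normal, i.e., the sequence $T_{Q,n}(x) = (q_1 \cdots q_n) x \bmod 1$ is uniformly distributed mod 1. If $y \in [0,1)$ satisfies $|T_{Q,n-1}(x) - T_{Q,n-1}(y)| \leq 1/q_n$ for all $n \geq 1$, then $y$ is also $Q$-distribution normal. -/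
/-!
The fractional parts of `q₁⋯qₙ x` and `q₁⋯qₙ y` differ by at most `1 / qₙ → 0`. So, up to
finitely many indices, whenever the one for `y` lies in `[a, b)` the one for `x` lies in
`[a - δ, b + δ)`, and whenever the one for `x` lies in `[a + δ, b - δ)` the one for `y` lies in
`[a, b)`; finitely many indices do not affect limiting frequencies.
-/

open Filter
open scoped Classical

/-- A sequence of reals is uniformly distributed mod 1. -/
def UDMod1 (u : ℕ → ℝ) : Prop :=
  ∀ a b : ℝ, 0 ≤ a → a < b → b ≤ 1 →
    Tendsto (fun N : ℕ =>
        (((Finset.range N).filter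
          (fun n => a ≤ Int.fract (u n) ∧ Int.fract (u n) < b)).card : ℝ) / N)
      atTop (nhds (b - a))

open Topology Finset

noncomputable def relFreq (P : ℕ → Prop) [DecidablePred P] (N : ℕ) : ℝ :=
  #((range N).filter P) / N

section relFreq

variable {P Q : ℕ → Prop} [DecidablePred P] [DecidablePred Q]

lemma card_filter_range_le_add {N₀ : ℕ} (h : ∀ n, N₀ ≤ n → P n → Q n) (N : ℕ) :
    #((range N).filter P) ≤ #((range N).filter Q) + N₀ := by
  have hsub : (range N).filter P ⊆ (range N).filter Q ∪ range N₀ := by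
    intro n hn
    rw [mem_filter, mem_range] at hn
    rw [mem_union, mem_filter, mem_range, mem_range]
    by_cases hn₀ : N₀ ≤ n
    · exact Or.inl ⟨hn.1, h n hn₀ hn.2⟩
    · exact Or.inr (not_le.1 hn₀)
  calc #((range N).filter P) ≤ #((range N).filter Q ∪ range N₀) := card_le_card hsub
    _ ≤ #((range N).filter Q) + #(range N₀) := card_union_le _ _
    _ = #((range N).filter Q) + N₀ := by rw [card_range]

lemma relFreq_le_add {N₀ : ℕ} (h : ∀ n, N₀ ≤ n → P n → Q n) (N : ℕ) :
    relFreq P N ≤ relFreq Q N + N₀ / N := by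
  rw [relFreq, relFreq, ← add_div]
  gcongr
  exact_mod_cast card_filter_range_le_add h N

lemma eventually_relFreq_lt {c c' : ℝ} (h : ∀ᶠ n in atTop, P n → Q n)
    (hQ : Tendsto (relFreq Q) atTop (𝓝 c)) (hc : c < c') :
    ∀ᶠ N in atTop, relFreq P N < c' := by
  obtain ⟨N₀, hN₀⟩ := eventually_atTop.1 h
  have hlim : Tendsto (fun N : ℕ => relFreq Q N + N₀ / N) atTop (𝓝 c) := by
    simpa using hQ.add (tendsto_const_div_atTop_nhds_zero_nat (N₀ : ℝ))
  filter_upwards [hlim.eventually (gt_mem_nhds hc)] with N hN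
  exact (relFreq_le_add hN₀ N).trans_lt hN

lemma eventually_lt_relFreq {c c' : ℝ} (h : ∀ᶠ n in atTop, Q n → P n)
    (hQ : Tendsto (relFreq Q) atTop (𝓝 c)) (hc : c' < c) :
    ∀ᶠ N in atTop, c' < relFreq P N := by
  obtain ⟨N₀, hN₀⟩ := eventually_atTop.1 h
  have hlim : Tendsto (fun N : ℕ => relFreq Q N - N₀ / N) atTop (𝓝 c) := by
    simpa using hQ.sub (tendsto_const_div_atTop_nhds_zero_nat (N₀ : ℝ))
  filter_upwards [hlim.eventually (lt_mem_nhds hc)] with N hN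
  exact hN.trans_le (sub_le_iff_le_add.2 (relFreq_le_add hN₀ N))

end relFreq

lemma udMod1_iff {u : ℕ → ℝ} :
    UDMod1 u ↔ ∀ a b : ℝ, 0 ≤ a → a < b → b ≤ 1 →
      Tendsto (relFreq fun n => a ≤ Int.fract (u n) ∧ Int.fract (u n) < b) atTop
        (𝓝 (b - a)) :=
  Iff.rfl

theorem UDMod1.of_tendsto_fract_sub {u v : ℕ → ℝ} (hu : UDMod1 u)
    (huv : Tendsto (fun n => Int.fract (u n) - Int.fract (v n)) atTop (𝓝 0)) :
    UDMod1 v := by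
  rw [udMod1_iff] at hu ⊢
  intro a b ha hab hb
  have hclose : ∀ δ > 0, ∀ᶠ n in atTop, |Int.fract (u n) - Int.fract (v n)| < δ :=
    fun δ hδ => by simpa using huv.eventually (Metric.ball_mem_nhds 0 hδ)
  refine tendsto_order.2 ⟨fun c hc => ?_, fun c hc => ?_⟩
  · obtain ⟨δ, hδ, hδab, hδc⟩ : ∃ δ > 0, 2 * δ < b - a ∧ c < b - a - 2 * δ :=
      ⟨min ((b - a - c) / 3) ((b - a) / 3), lt_min (by linarith) (by linarith),
        by linarith [min_le_right ((b - a - c) / 3) ((b - a) / 3)],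
        by linarith [min_le_left ((b - a - c) / 3) ((b - a) / 3)]⟩
    refine eventually_lt_relFreq ?_
      (hu (a + δ) (b - δ) (by linarith) (by linarith) (by linarith)) (by linarith)
    filter_upwards [hclose δ hδ] with n hn hu'
    have := abs_lt.1 hn
    constructor <;> linarith
  · obtain ⟨δ, hδ, hδc⟩ : ∃ δ > 0, b - a + 2 * δ < c :=
      ⟨(c - (b - a)) / 3, by linarith, by linarith⟩
    have hA : a - δ ≤ max (a - δ) 0 := le_max_left _ _
    have hB : min (b + δ) 1 ≤ b + δ := min_le_left _ _
    have hAB : max (a - δ) 0 < min (b + δ) 1 :=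
      max_lt (lt_min (by linarith) (by linarith)) (lt_min (by linarith) one_pos)
    refine eventually_relFreq_lt ?_
      (hu _ _ (le_max_right _ _) hAB (min_le_right _ _)) (by linarith)
    filter_upwards [hclose δ hδ] with n hn hv
    have := abs_lt.1 hn
    exact ⟨max_le (by linarith) (Int.fract_nonneg _), lt_min (by linarith) (Int.fract_lt_one _)⟩

theorem stmt14_general (q : ℕ → ℕ)
    (hqinf : Tendsto q atTop atTop)
    (x y : ℝ)
    (hxud : UDMod1 (fun n => (∏ i ∈ Finset.range n, (q i : ℝ)) * x))
    (hclose : ∀ n : ℕ,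
      |Int.fract ((∏ i ∈ Finset.range n, (q i : ℝ)) * x) -
          Int.fract ((∏ i ∈ Finset.range n, (q i : ℝ)) * y)| ≤ 1 / q n) :
    UDMod1 (fun n => (∏ i ∈ Finset.range n, (q i : ℝ)) * y) := by
  refine hxud.of_tendsto_fract_sub (squeeze_zero_norm (fun n => ?_)
    ((tendsto_const_div_atTop_nhds_zero_nat 1).comp hqinf))
  simpa only [Real.norm_eq_abs, Function.comp_apply] using hclose n

theorem stmt14 (q : ℕ → ℕ) (hq : ∀ n, 2 ≤ q n)
    (hqinf : Tendsto q atTop atTop)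
    (x y : ℝ) (hx : x ∈ Set.Ico (0 : ℝ) 1) (hy : y ∈ Set.Ico (0 : ℝ) 1)
    (hxud : UDMod1 (fun n => (∏ i ∈ Finset.range n, (q i : ℝ)) * x))
    (hclose : ∀ n : ℕ,
      |Int.fract ((∏ i ∈ Finset.range n, (q i : ℝ)) * x) -
          Int.fract ((∏ i ∈ Finset.range n, (q i : ℝ)) * y)| ≤ 1 / q n) :
    UDMod1 (fun n => (∏ i ∈ Finset.range n, (q i : ℝ)) * y) :=
  stmt14_general q hqinf x y hxud hclose
end

section
/- Let $P = (p_n)$ and $Q = (q_n)$ be sequences of integers with $p_n, q_n \geq 3$, $q_n \geq p_n$ for all $n$, $q_n \to \infty$, $\lim_{n\to\infty} \frac{\log q_{n+j+1}}{\log(q_1\cdots q_n)} = 0$ for all $j \geq 0$, and $\sum_{n=1}^{\infty} \frac{q_n - p_n}{q_n} < \infty$. Then for every $\alpha \in (0,1)$ and every $k \geq 0$: $\limsup_{n\to\infty} \frac{(q_1\cdots q_n)^{\alpha}}{p_1 \cdots p_n} \cdot \left( \frac{q_{n+1} \cdots q_{n+k+1}}{\max(1, q_{n+1} - p_{n+1})}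 \right)^{\alpha} = 0$. -/
open Filter Finset Real Topology

/-!
Since `∑ (q n - p n) / q n < ∞`, the ratios `(q₁⋯qₙ) / (p₁⋯pₙ)` stay bounded, so up to a
constant the sequence is at most `Qₙ ^ (α - 1) * Rₙ ^ α`, where `Qₙ = q₁⋯qₙ` and
`Rₙ = qₙ₊₁⋯qₙ₊ₖ₊₁`. The growth hypothesis gives `log Rₙ = o(log Qₙ)`, and `log Qₙ → ∞` since
every `qₙ ≥ 3`, so the logarithm of this bound, `log Qₙ * (α - 1 + o(1))`, tends to `-∞`.
-/

lemma tendsto_prod_range_atTop_of_one_lt_le {a : ℕ → ℝ} {c : ℝ} (hc : 1 < c)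
    (ha : ∀ n, c ≤ a n) : Tendsto (fun n => ∏ i ∈ range n, a i) atTop atTop := by
  refine tendsto_atTop_mono (fun n => ?_) (tendsto_pow_atTop_atTop_of_one_lt hc)
  calc c ^ n = ∏ _i ∈ range n, c := by rw [prod_const, card_range]
    _ ≤ ∏ i ∈ range n, a i := prod_le_prod (fun _ _ => by linarith) fun i _ => ha i

lemma tendsto_log_prod_Ico_div {a L : ℕ → ℝ} (ha : ∀ n, a n ≠ 0)
    (h : ∀ j, Tendsto (fun n => log (a (n + j)) / L n) atTop (𝓝 0)) (m : ℕ) :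
    Tendsto (fun n => log (∏ i ∈ Ico n (n + m), a i) / L n) atTop (𝓝 0) := by
  have := tendsto_finsetSum (range m) fun j _ => h j
  simp only [sum_const_zero] at this
  refine this.congr fun n => ?_
  rw [log_prod fun i _ => ha i, sum_Ico_eq_sum_range, Nat.add_sub_cancel_left, sum_div]

lemma exists_prod_range_div_prod_range_le {a b : ℕ → ℝ} (hb : ∀ n, 0 < b n)
    (hba : ∀ n, b n ≤ a n) (hsum : Summable fun n => (a n - b n) / a n) :
    ∃ C, ∀ n, (∏ i ∈ range n, a i) / ∏ i ∈ range n, b i ≤ C := by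
  have ha : ∀ n, 0 < a n := fun n => (hb n).trans_le (hba n)
  have hlog : Summable fun n => log (a n / b n) := by
    refine (summable_log_one_add_of_summable hsum.neg).neg.congr fun n => ?_
    have : 1 + -((a n - b n) / a n) = (a n / b n)⁻¹ := by
      field_simp [(ha n).ne']
      ring
    rw [this, log_inv, neg_neg]
  refine ⟨exp (∑' n, log (a n / b n)), fun n => ?_⟩
  rw [← prod_div_distrib, ← log_le_iff_le_exp (prod_pos fun i _ => div_pos (ha i) (hb i)),
    log_prod fun i _ => (div_pos (ha i) (hb i)).ne']
  exact hlog.sum_le_tsum _ fun i _ => log_nonneg ((one_le_div (hb i)).2 (hba i))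

lemma tendsto_rpow_sub_one_mul_rpow_nhds_zero {ι : Type*} {l : Filter ι} {u v : ι → ℝ}
    {α : ℝ} (hα : α < 1) (hu : ∀ i, 0 < u i) (hv : ∀ i, 0 < v i)
    (hlogu : Tendsto (fun i => log (u i)) l atTop)
    (hlogv : Tendsto (fun i => log (v i) / log (u i)) l (𝓝 0)) :
    Tendsto (fun i => u i ^ (α - 1) * v i ^ α) l (𝓝 0) := by
  have hexp : Tendsto (fun i => log (u i) * (α - 1 + α * (log (v i) / log (u i)))) l atBot := by
    refine hlogu.atTop_mul_neg (by linarith : α - 1 + α * 0 < 0) ?_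
    exact tendsto_const_nhds.add (tendsto_const_nhds.mul hlogv)
  refine (tendsto_exp_atBot.comp hexp).congr' ?_
  filter_upwards [hlogu.eventually_gt_atTop 0] with i hi
  rw [Function.comp_apply, rpow_def_of_pos (hu i), rpow_def_of_pos (hv i), ← exp_add]
  field_simp

theorem stmt17_general (p q : ℕ → ℕ) (hp : ∀ n, 3 ≤ p n) (hq3 : ∀ n, 3 ≤ q n)
    (hpq : ∀ n, p n ≤ q n)
    (hlog : ∀ j : ℕ, Tendsto
      (fun n => Real.log (q (n + j)) / Real.log (∏ i ∈ Finset.range n, (q i : ℝ)))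
      atTop (nhds 0))
    (hsum : Summable fun n => ((q n : ℝ) - p n) / q n) :
    ∀ α : ℝ, α ∈ Set.Ioo (0 : ℝ) 1 → ∀ k : ℕ,
      Tendsto (fun n =>
          (∏ i ∈ Finset.range n, (q i : ℝ)) ^ α / (∏ i ∈ Finset.range n, (p i : ℝ)) *
            ((∏ i ∈ Finset.Ico n (n + k + 1), (q i : ℝ)) / max 1 ((q n : ℝ) - p n)) ^ α)
        atTop (nhds 0) := by
  rintro α ⟨hα0, hα1⟩ k
  have hp0 : ∀ n, (0 : ℝ) < p n := fun n => by exact_mod_cast (hp n).trans_lt' three_pos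
  have hq0 : ∀ n, (0 : ℝ) < q n := fun n => by exact_mod_cast (hq3 n).trans_lt' three_pos
  set Q := fun n => ∏ i ∈ range n, (q i : ℝ)
  set R := fun n => ∏ i ∈ Ico n (n + k + 1), (q i : ℝ)
  have hQ : ∀ n, 0 < Q n := fun n => prod_pos fun i _ => hq0 i
  have hR : ∀ n, 0 < R n := fun n => prod_pos fun i _ => hq0 i
  obtain ⟨C, hC⟩ :=
    exists_prod_range_div_prod_range_le hp0 (fun n => by exact_mod_cast hpq n) hsum
  have hlogQ : Tendsto (fun n => log (Q n)) atTop atTop :=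
    tendsto_log_atTop.comp <| tendsto_prod_range_atTop_of_one_lt_le (by norm_num : (1 : ℝ) < 3)
      fun n => by exact_mod_cast hq3 n
  have hlogRQ := tendsto_log_prod_Ico_div (fun n => (hq0 n).ne') hlog (k + 1)
  have hlim := (tendsto_rpow_sub_one_mul_rpow_nhds_zero hα1 hQ hR hlogQ hlogRQ).const_mul C
  rw [mul_zero] at hlim
  have hC0 : 0 ≤ C := zero_le_one.trans (by simpa using hC 0)
  refine squeeze_zero (fun n => by positivity) (fun n => ?_) hlim
  have hM : 1 ≤ max 1 ((q n : ℝ) - p n) := le_max_left _ _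
  calc Q n ^ α / (∏ i ∈ range n, (p i : ℝ)) * (R n / max 1 ((q n : ℝ) - p n)) ^ α
      = Q n / (∏ i ∈ range n, (p i : ℝ)) * Q n ^ (α - 1) *
          (R n / max 1 ((q n : ℝ) - p n)) ^ α := by
        have := (hQ n).ne'
        rw [rpow_sub_one this]
        field_simp
    _ ≤ C * Q n ^ (α - 1) * R n ^ α := by
        gcongr
        · exact hC n
        · exact div_le_self (hR n).le hM
    _ = C * (Q n ^ (α - 1) * R n ^ α) := mul_assoc _ _ _

theorem stmt17 (p q : ℕ → ℕ) (hp : ∀ n, 3 ≤ p n) (hq3 : ∀ n, 3 ≤ q n)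
    (hpq : ∀ n, p n ≤ q n) (hqinf : Tendsto q atTop atTop)
    (hlog : ∀ j : ℕ, Tendsto
      (fun n => Real.log (q (n + j)) / Real.log (∏ i ∈ Finset.range n, (q i : ℝ)))
      atTop (nhds 0))
    (hsum : Summable fun n => ((q n : ℝ) - p n) / q n) :
    ∀ α : ℝ, α ∈ Set.Ioo (0 : ℝ) 1 → ∀ k : ℕ,
      Tendsto (fun n =>
          (∏ i ∈ Finset.range n, (q i : ℝ)) ^ α / (∏ i ∈ Finset.range n, (p i : ℝ)) *
            ((∏ i ∈ Finset.Ico n (n + k + 1), (q i : ℝ)) / max 1 ((q n : ℝ) - p n)) ^ α)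
        atTop (nhds 0) :=
  stmt17_general p q hp hq3 hpq hlog hsum
end
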